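/- arXiv:1509.07812 — 3 statements merged into one kernel-verified Lean document; each statement's English description precedes it below -/
import Mathlib

section
/- Let Φ = (φ_n)_n be a frame for H and let A be a bounded operator on H with ‖Id_H − A‖ < 1. A Bessel sequence Φ^{ad} = (φ^{ad}_n)_n is an approximately dual frame of Φ satisfying T_Φ U_{Φ^{ad}} = A if and only if there exists a bounded operator Θ : H → ℓ²(ℕ) with T_Φ ∘ Θ = 0 such that φ^{ad}_n = A* S_Φ^{-1} φ_n + Θ*(δ_n) for all n ∈ ℕ. -/
noncomputable section

open ContinuousLinearMap
open scoped ComplexInnerProductSpace ENNReal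

variable {H : Type*} [NormedAddCommGroup H] [InnerProductSpace ℂ H] [CompleteSpace H]

/-- The sequence space `ℓ²(ℕ)`. -/
abbrev Ltwo : Type := lp (fun _ : ℕ => ℂ) 2

/-- `φ` is a Bessel sequence with Bessel bound `M`:
`∑ₙ |⟨f, φₙ⟩|² ≤ M‖f‖²` for every `f`.  (Mathlib inner products are conjugate-linear in the
first slot, so `⟪φ n, f⟫` corresponds to the paper's `⟨f, φₙ⟩`.) -/
def IsBesselBound (φ : ℕ → H) (M : ℝ) : Prop :=
  ∀ f : H, Summable (fun n => ‖(⟪φ n, f⟫ : ℂ)‖ ^ 2) ∧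
    ∑' n, ‖(⟪φ n, f⟫ : ℂ)‖ ^ 2 ≤ M * ‖f‖ ^ 2

/-- `φ` is a frame with lower frame bound `m` and upper (Bessel) bound `M`. -/
def IsFrameWith (φ : ℕ → H) (m M : ℝ) : Prop :=
  0 < m ∧ IsBesselBound φ M ∧
    ∀ f : H, m * ‖f‖ ^ 2 ≤ ∑' n, ‖(⟪φ n, f⟫ : ℂ)‖ ^ 2

/-- `φ` is a frame for `H`. -/
def IsFrame (φ : ℕ → H) : Prop := ∃ m M, IsFrameWith φ m M

/-- `U` is the analysis operator of `φ` : `U f = (⟨f, φₙ⟩)ₙ`.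
The synthesis operator is then `T_φ = adjoint U` and the frame operator is
`S_φ = adjoint U ∘L U`. -/
def IsAnalysisOp (φ : ℕ → H) (U : H →L[ℂ] Ltwo) : Prop :=
  ∀ (f : H) (n : ℕ), U f n = (⟪φ n, f⟫ : ℂ)
lemma adjoint_single' (φ : ℕ → H) (U : H →L[ℂ] Ltwo) (hU : IsAnalysisOp φ U) (n : ℕ) :
    adjoint U (lp.single 2 n 1) = φ n := by
  refine ext_inner_right ℂ fun f => ?_
  rw [adjoint_inner_left, lp.inner_single_left, hU]
  simp

/-- Let Φ be a frame for H, `Sinv = S_Φ^{-1}` the inverse of its frame operator,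
and `A` bounded with `‖Id - A‖ < 1`.  A Bessel sequence Φᵃᵈ (with analysis operator `V`) is
an approximately dual frame of Φ satisfying `T_Φ U_{Φᵃᵈ} = A` iff there is a bounded
`Θ : H → ℓ²` with `T_Φ ∘ Θ = 0` such that `φᵃᵈₙ = A* S_Φ^{-1} φₙ + Θ*(δₙ)` for all n. -/
theorem statement4 (φ : ℕ → H) (hφ : IsFrame φ)
    (Uφ : H →L[ℂ] Ltwo) (hUφ : IsAnalysisOp φ Uφ)
    (Sinv : H →L[ℂ] H)
    (hS1 : (adjoint Uφ ∘L Uφ) ∘L Sinv = 1) (hS2 : Sinv ∘L (adjoint Uφ ∘L Uφ) = 1)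
    (A : H →L[ℂ] H) (hA : ‖(1 : H →L[ℂ] H) - A‖ < 1)
    (φad : ℕ → H) (M : ℝ) (V : H →L[ℂ] Ltwo)
    (hBessel : IsBesselBound φad M) (hV : IsAnalysisOp φad V) :
    (‖(1 : H →L[ℂ] H) - adjoint Uφ ∘L V‖ < 1 ∧ adjoint Uφ ∘L V = A) ↔
      ∃ Θ : H →L[ℂ] Ltwo, adjoint Uφ ∘L Θ = 0 ∧
        ∀ n : ℕ, φad n = adjoint A (Sinv (φ n)) + adjoint Θ (lp.single 2 n 1) := by
  have hsa : adjoint (adjoint Uφ ∘L Uφ) = adjoint Uφ ∘L Uφ := by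
    rw [adjoint_comp, adjoint_adjoint]
  have hSinv_sa : adjoint Sinv = Sinv := by
    have h1 : adjoint Sinv ∘L (adjoint Uφ ∘L Uφ) = 1 := by
      rw [← hsa, ← adjoint_comp, hS1, one_def, adjoint_id]
    exact left_inv_eq_right_inv h1 hS1
  constructor
  · rintro ⟨-, hTV⟩
    refine ⟨V - Uφ ∘L (Sinv ∘L A), ?_, fun n => ?_⟩
    · rw [comp_sub, hTV, ← comp_assoc, ← comp_assoc, hS1, one_def, id_comp, sub_self]
    · have : adjoint (V - Uφ ∘L (Sinv ∘L A)) (lp.single 2 n 1)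
          = φad n - adjoint A (Sinv (φ n)) := by
        rw [map_sub, sub_apply, adjoint_single' φad V hV,
          adjoint_comp, adjoint_comp, hSinv_sa, comp_apply, comp_apply,
          adjoint_single' φ Uφ hUφ]
      rw [this]; abel
  · rintro ⟨Θ, hΘ0, hrep⟩
    have key : adjoint Uφ ∘L V = A := by
      ext f
      have hVf : V f = Uφ (Sinv (A f)) + Θ f := by
        apply lp.ext; funext n
        have h1 : (V f) n = ⟪φad n, f⟫ := hV f n
        rw [lp.coeFn_add, Pi.add_apply] at *
        rw [h1, hrep n, inner_add_left, adjoint_inner_left A, adjoint_inner_left Θ,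
          lp.inner_single_left, ← hSinv_sa, adjoint_inner_left, ← hUφ (Sinv (A f)) n]
        simp [hSinv_sa]
      rw [comp_apply, hVf, map_add]
      have h2 : adjoint Uφ (Θ f) = 0 := by
        have := congrArg (fun (T : H →L[ℂ] H) => T f) hΘ0
        simpa using this
      have h3 : adjoint Uφ (Uφ (Sinv (A f))) = A f := by
        have := congrArg (fun (T : H →L[ℂ] H) => T (A f)) hS1
        simpa using this
      rw [h2, h3, add_zero]
    exact ⟨key ▸ hA, key⟩
end
end

section
/- Let Φ = (φ_n)_n and Ψ = (ψ_n)_n be two frames for H and let Φ^{gd} = (φ^{gd}_n)_n be a fixed g-dual frame of Φ with corresponding invertible operator A. Then there exist constants ε > 0 and C > 0 (depending only on Φ, Ψ and Φ^{gd}) with the following property: if the difference sequence Φ − Ψ = (φ_n − ψ_n)_n is a Bessel sequence with Bessel bound M_{Φ−Ψ} ≤ ε, then there exists a g-dual frame Ψ^{gd} = (ψ^{gd}_n)_n of Ψ with corresponding invertible operator A (so that T_Φ U_{Φ^{gd}} = A^{-1} = T_Ψ U_{Ψ^{gd}}) such that Φ^{gd} − Ψ^{gd} = (φ^{gd}_n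 − ψ^{gd}_n)_n is a Bessel sequence with Bessel bound at most C · M_{Φ−Ψ}. -/
noncomputable section

open ContinuousLinearMap
open scoped ComplexInnerProductSpace ENNReal

variable {H : Type*} [NormedAddCommGroup H] [InnerProductSpace ℂ H] [CompleteSpace H]

/-! With `D = U_Φ - U_Ψ` we have `‖D‖² ≤ M'` and `T_Ψ U_{Φᵍᵈ} = A⁻¹ (1 - t)` for
`t = A (A⁻¹ - T_Ψ U_{Φᵍᵈ}) = A D* U_{Φᵍᵈ}`, so `‖t‖ ≤ ‖A‖ ‖U_{Φᵍᵈ}‖ √M'`. For `M'` small,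
`‖t‖ ≤ 1/2`, hence `G = (1 - t)⁻¹` exists with `‖1 - G‖ ≤ 2‖t‖`. The frame `ψᵍᵈₙ = G* φᵍᵈₙ` has
analysis operator `U_{Φᵍᵈ} G`, so `T_Ψ U_{Ψᵍᵈ} = A⁻¹ (1 - t) G = A⁻¹`, and `Φᵍᵈ - Ψᵍᵈ` has analysis
operator `U_{Φᵍᵈ} (1 - G)`, whose squared norm is `O(‖t‖²) = O(M')`. -/

lemma Ltwo.hasSum_norm_sq (x : Ltwo) : HasSum (fun n => ‖x n‖ ^ 2) (‖x‖ ^ 2) := by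
  simpa using lp.hasSum_norm (p := 2) (by norm_num) x

section

omit [CompleteSpace H]

namespace IsBesselBound

variable {φ : ℕ → H} {M : ℝ}

lemma nonneg [Nontrivial H] (h : IsBesselBound φ M) : 0 ≤ M := by
  obtain ⟨f, hf⟩ := exists_ne (0 : H)
  have hpos : 0 < ‖f‖ ^ 2 := by positivity
  have := (h f).2
  have : 0 ≤ ∑' n, ‖(⟪φ n, f⟫ : ℂ)‖ ^ 2 := tsum_nonneg fun n => by positivity
  nlinarith

lemma of_subsingleton [Subsingleton H] (φ : ℕ → H) (M : ℝ) : IsBesselBound φ M := by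
  intro f
  simp [Subsingleton.elim f 0]

end IsBesselBound

namespace IsAnalysisOp

variable {φ ψ : ℕ → H} {U V : H →L[ℂ] Ltwo} {M : ℝ}

lemma hasSum_norm_sq (hU : IsAnalysisOp φ U) (f : H) :
    HasSum (fun n => ‖(⟪φ n, f⟫ : ℂ)‖ ^ 2) (‖U f‖ ^ 2) := by
  simpa only [hU f] using Ltwo.hasSum_norm_sq (U f)

lemma isBesselBound_iff (hU : IsAnalysisOp φ U) :
    IsBesselBound φ M ↔ ∀ f, ‖U f‖ ^ 2 ≤ M * ‖f‖ ^ 2 := by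
  simp only [IsBesselBound, (hU.hasSum_norm_sq _).tsum_eq, (hU.hasSum_norm_sq _).summable,
    true_and]

lemma isBesselBound_of_opNorm_sq_le (hU : IsAnalysisOp φ U) (h : ‖U‖ ^ 2 ≤ M) :
    IsBesselBound φ M :=
  hU.isBesselBound_iff.2 fun f => calc
    ‖U f‖ ^ 2 ≤ (‖U‖ * ‖f‖) ^ 2 := by gcongr; exact U.le_opNorm f
    _ = ‖U‖ ^ 2 * ‖f‖ ^ 2 := mul_pow _ _ _
    _ ≤ M * ‖f‖ ^ 2 := by gcongr

lemma opNorm_sq_le [Nontrivial H] (hU : IsAnalysisOp φ U) (h : IsBesselBound φ M) :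
    ‖U‖ ^ 2 ≤ M := by
  have hM := h.nonneg
  rw [← Real.le_sqrt (norm_nonneg _) hM]
  refine U.opNorm_le_bound (Real.sqrt_nonneg M) fun f => ?_
  rw [← Real.sqrt_sq (norm_nonneg (U f)), ← Real.sqrt_sq (norm_nonneg f), ← Real.sqrt_mul hM]
  exact Real.sqrt_le_sqrt (hU.isBesselBound_iff.1 h f)

lemma sub (hU : IsAnalysisOp φ U) (hV : IsAnalysisOp ψ V) :
    IsAnalysisOp (fun n => φ n - ψ n) (U - V) := fun f n => by
  simp [hU f n, hV f n]

end IsAnalysisOp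

end

lemma IsAnalysisOp.comp {φ : ℕ → H} {U : H →L[ℂ] Ltwo} (hU : IsAnalysisOp φ U) (B : H →L[ℂ] H) :
    IsAnalysisOp (fun n => adjoint B (φ n)) (U ∘L B) := fun f n => by
  rw [comp_apply, hU, adjoint_inner_left]

lemma IsFrame.adjoint_apply [Nontrivial H] {φ : ℕ → H} (hφ : IsFrame φ) {B L : H →L[ℂ] H}
    (hLB : L * B = 1) : IsFrame fun n => adjoint B (φ n) := by
  obtain ⟨m, M, hm, hM, hlow⟩ := hφ
  have hsum : ∀ f, ∑' n, ‖(⟪adjoint B (φ n), f⟫ : ℂ)‖ ^ 2 = ∑' n, ‖(⟪φ n, B f⟫ : ℂ)‖ ^ 2 :=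
    fun f => by simp only [adjoint_inner_left]
  have hL : 0 < ‖L‖ := norm_pos_iff.2 (left_ne_zero_of_mul_eq_one hLB)
  refine ⟨m / ‖L‖ ^ 2, M * ‖B‖ ^ 2, by positivity, fun f => ⟨?_, ?_⟩, fun f => ?_⟩
  · simpa only [adjoint_inner_left] using (hM (B f)).1
  · rw [hsum]
    calc _ ≤ M * ‖B f‖ ^ 2 := (hM (B f)).2
      _ ≤ M * (‖B‖ * ‖f‖) ^ 2 := by gcongr; exacts [hM.nonneg, B.le_opNorm f]
      _ = _ := by ring
  · have hf : ‖f‖ ≤ ‖L‖ * ‖B f‖ := by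
      simpa [← mul_apply_eq_comp, hLB] using L.le_opNorm (B f)
    rw [hsum, div_mul_eq_mul_div, div_le_iff₀ (by positivity)]
    calc m * ‖f‖ ^ 2 ≤ m * (‖L‖ * ‖B f‖) ^ 2 := by gcongr
      _ = m * ‖B f‖ ^ 2 * ‖L‖ ^ 2 := by ring
      _ ≤ _ := by gcongr; exact hlow (B f)

lemma norm_one_sub_le_of_one_sub_mul_eq_one {R : Type*} [SeminormedRing R] [NormOneClass R]
    {t G : R} (ht : ‖t‖ ≤ 1 / 2) (hG : (1 - t) * G = 1) : ‖1 - G‖ ≤ 2 * ‖t‖ := by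
  have key : 1 - G = -(t * G) := by rw [← hG]; noncomm_ring
  have : ‖1 - G‖ ≤ ‖t‖ * (1 + ‖1 - G‖) := calc
    ‖1 - G‖ = ‖t * G‖ := by rw [key, norm_neg]
    _ ≤ ‖t‖ * ‖G‖ := norm_mul_le _ _
    _ ≤ ‖t‖ * (1 + ‖1 - G‖) := by
      gcongr
      calc ‖G‖ = ‖1 - (1 - G)‖ := by rw [sub_sub_cancel]
        _ ≤ ‖(1 : R)‖ + ‖1 - G‖ := norm_sub_le _ _
        _ = 1 + ‖1 - G‖ := by rw [norm_one]
  nlinarith [mul_nonneg (sub_nonneg.2 ht) (norm_nonneg (1 - G))]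

lemma mul_eq_of_one_sub_mul_eq_one {R : Type*} [Ring R] {A Ainv S G : R} (hA : Ainv * A = 1)
    (hG : (1 - A * (Ainv - S)) * G = 1) : S * G = Ainv := by
  have : S = Ainv * (1 - A * (Ainv - S)) := by rw [mul_sub, ← mul_assoc, hA]; noncomm_ring
  rw [this, mul_assoc, hG, mul_one]

theorem statement9_general (φ ψ φgd : ℕ → H) (hφgd : IsFrame φgd)
    (Uφ Uψ Vgd : H →L[ℂ] Ltwo)
    (hUφ : IsAnalysisOp φ Uφ) (hUψ : IsAnalysisOp ψ Uψ) (hVgd : IsAnalysisOp φgd Vgd)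
    (A Ainv : H →L[ℂ] H) (hA2 : Ainv ∘L A = 1)
    (hgd : adjoint Uφ ∘L Vgd = Ainv) :
    ∃ ε > (0 : ℝ), ∃ C > (0 : ℝ), ∀ M' : ℝ,
      IsBesselBound (fun n => φ n - ψ n) M' → M' ≤ ε →
      ∃ (ψgd : ℕ → H) (V : H →L[ℂ] Ltwo),
        IsFrame ψgd ∧ IsAnalysisOp ψgd V ∧
        adjoint Uψ ∘L V = Ainv ∧
        IsBesselBound (fun n => φgd n - ψgd n) (C * M') := by
  set κ := (‖A‖ + 1) * (‖Vgd‖ + 1)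
  have hκ : 0 < κ := by positivity
  refine ⟨1 / (4 * κ ^ 2), by positivity, 4 * κ ^ 4, by positivity, fun M' hM' hM'ε => ?_⟩
  rcases subsingleton_or_nontrivial H with hH | hH
  · exact ⟨φgd, Vgd, hφgd, hVgd, Subsingleton.elim _ _, IsBesselBound.of_subsingleton _ _⟩
  set D := Uφ - Uψ
  have hD : ‖D‖ ^ 2 ≤ M' := (hUφ.sub hUψ).opNorm_sq_le hM'
  have hT : Ainv - adjoint Uψ ∘L Vgd = adjoint D ∘L Vgd := by rw [← hgd, ← sub_comp, ← map_sub]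
  set t : H →L[ℂ] H := A * (Ainv - adjoint Uψ ∘L Vgd) with ht_def
  have ht : ‖t‖ ≤ κ * ‖D‖ := calc
    ‖t‖ ≤ ‖A‖ * (‖D‖ * ‖Vgd‖) := by
      rw [ht_def, hT, ← adjoint.norm_map D]
      exact (norm_mul_le _ _).trans (by gcongr; exact opNorm_comp_le _ _)
    _ ≤ κ * ‖D‖ := by nlinarith [norm_nonneg A, norm_nonneg Vgd, norm_nonneg D]
  have ht2 : ‖t‖ ≤ 1 / 2 := by
    refine ht.trans (pow_le_pow_iff_left₀ (by positivity) (by norm_num) two_ne_zero |>.1 ?_)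
    calc (κ * ‖D‖) ^ 2 ≤ κ ^ 2 * (1 / (4 * κ ^ 2)) := by rw [mul_pow]; gcongr; linarith
      _ = (1 / 2) ^ 2 := by field_simp; ring
  obtain ⟨G, hG⟩ : ∃ G, (1 - t) * G = 1 := ⟨_, (Units.oneSub t (by linarith)).mul_inv⟩
  refine ⟨fun n => adjoint G (φgd n), Vgd ∘L G, hφgd.adjoint_apply hG, hVgd.comp G,
    mul_eq_of_one_sub_mul_eq_one hA2 hG,
    (hVgd.sub (hVgd.comp G)).isBesselBound_of_opNorm_sq_le ?_⟩
  calc ‖Vgd - Vgd ∘L G‖ ^ 2 = ‖Vgd ∘L (1 - G)‖ ^ 2 := by rw [comp_sub, one_def, comp_id]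
    _ ≤ (κ * (2 * (κ * ‖D‖))) ^ 2 := by
      gcongr
      refine (opNorm_comp_le _ _).trans (mul_le_mul ?_ ?_ (norm_nonneg _) hκ.le)
      · nlinarith [norm_nonneg A, norm_nonneg Vgd]
      · exact (norm_one_sub_le_of_one_sub_mul_eq_one ht2 hG).trans (by linarith)
    _ = 4 * κ ^ 4 * ‖D‖ ^ 2 := by ring
    _ ≤ 4 * κ ^ 4 * M' := by gcongr

/-- Let Φ, Ψ be frames for H and Φᵍᵈ a fixed g-dual frame of Φ with corresponding
invertible operator A (so `T_Φ U_{Φᵍᵈ} = A⁻¹ = Ainv`).  Then there are constants ε, C > 0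
such that whenever Φ - Ψ is a Bessel sequence with bound `M' ≤ ε`, there is a g-dual frame
Ψᵍᵈ of Ψ with the same corresponding operator A (i.e. `T_Ψ U_{Ψᵍᵈ} = A⁻¹`) such that
Φᵍᵈ - Ψᵍᵈ is a Bessel sequence with bound `C * M'`. -/
theorem statement9 (φ ψ φgd : ℕ → H) (hφ : IsFrame φ) (hψ : IsFrame ψ) (hφgd : IsFrame φgd)
    (Uφ Uψ Vgd : H →L[ℂ] Ltwo)
    (hUφ : IsAnalysisOp φ Uφ) (hUψ : IsAnalysisOp ψ Uψ) (hVgd : IsAnalysisOp φgd Vgd)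
    (A Ainv : H →L[ℂ] H) (hA1 : A ∘L Ainv = 1) (hA2 : Ainv ∘L A = 1)
    (hgd : adjoint Uφ ∘L Vgd = Ainv) :
    ∃ ε > (0 : ℝ), ∃ C > (0 : ℝ), ∀ M' : ℝ,
      IsBesselBound (fun n => φ n - ψ n) M' → M' ≤ ε →
      ∃ (ψgd : ℕ → H) (V : H →L[ℂ] Ltwo),
        IsFrame ψgd ∧ IsAnalysisOp ψgd V ∧
        adjoint Uψ ∘L V = Ainv ∧
        IsBesselBound (fun n => φgd n - ψgd n) (C * M') :=
  statement9_general φ ψ φgd hφgd Uφ Uψ Vgd hUφ hUψ hVgd A Ainv hA2 hgd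
end
end

section
/- Let Φ = (φ_n)_n and Ψ = (ψ_n)_n be two frames for H such that Range(U_Φ) ⊊ Range(U_Ψ) or Range(U_Ψ) ⊊ Range(U_Φ) (strict inclusion of subspaces of ℓ²(ℕ)). Then Φ and Ψ are not g-dual frames, i.e., the operator T_Φ U_Ψ is not invertible; in particular, Φ and Ψ are not approximately dual frames, i.e., ‖Id_H − T_Φ U_Ψ‖ ≥ 1 and ‖Id_H − T_Ψ U_Φ‖ ≥ 1. -/
/-!
The lower frame bound makes an analysis operator bounded below, so its range is closed.
If `range U_Φ ⊊ range U_Ψ`, the orthogonal complement of the closed subspace `range U_Φ`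
inside `range U_Ψ` is nontrivial; it lies in `(range U_Φ)ᗮ = ker T_Φ`, so `T_Φ U_Ψ f = 0` for
some `f ≠ 0`. The other inclusion reduces to this one by taking adjoints, and an operator within
distance `< 1` of the identity is invertible by the Neumann series.
-/

noncomputable section

open ContinuousLinearMap
open scoped ComplexInnerProductSpace ENNReal

variable {H : Type*} [NormedAddCommGroup H] [InnerProductSpace ℂ H] [CompleteSpace H]

lemma lp.norm_sq_eq_tsum {ι : Type*} {E : ι → Type*} [∀ i, NormedAddCommGroup (E i)]
    (g : lp E 2) : ‖g‖ ^ 2 = ∑' i, ‖g i‖ ^ 2 := by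
  simpa [Real.rpow_two] using lp.norm_rpow_eq_tsum (p := 2) (by norm_num) g

lemma one_le_norm_one_sub_of_not_isUnit {R : Type*} [NormedRing R] [HasSummableGeomSeries R]
    {a : R} (ha : ¬ IsUnit a) : 1 ≤ ‖1 - a‖ := by
  by_contra! h
  exact ha (by simpa using isUnit_one_sub_of_norm_lt_one h)

section Adjoint

variable {𝕜 E F G : Type*} [RCLike 𝕜]
  [NormedAddCommGroup E] [InnerProductSpace 𝕜 E] [CompleteSpace E]
  [NormedAddCommGroup F] [InnerProductSpace 𝕜 F] [CompleteSpace F]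
  [NormedAddCommGroup G] [NormedSpace 𝕜 G]

lemma isUnit_adjoint_comp_comm (U V : E →L[𝕜] F) :
    IsUnit (adjoint U ∘L V) ↔ IsUnit (adjoint V ∘L U) := by
  rw [← isUnit_star, star_eq_adjoint, adjoint_comp, adjoint_adjoint]

lemma exists_adjoint_apply_eq_zero_of_range_ssubset {U : E →L[𝕜] F} {V : G →L[𝕜] F}
    (hU : IsClosed (Set.range U)) (h : Set.range U ⊂ Set.range V) :
    ∃ g, V g ≠ 0 ∧ adjoint U (V g) = 0 := by
  set K := LinearMap.range (U : E →ₗ[𝕜] F)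
  set L := LinearMap.range (V : G →ₗ[𝕜] F)
  have hKL : K < L := by
    rwa [← SetLike.coe_ssubset_coe, LinearMap.coe_range, LinearMap.coe_range]
  have : CompleteSpace K := by
    have : IsClosed (K : Set F) := by rwa [LinearMap.coe_range]
    exact this.completeSpace_coe
  have hne : Kᗮ ⊓ L ≠ ⊥ := by
    intro hbot
    have := K.sup_orthogonal_inf_of_hasOrthogonalProjection hKL.le
    rw [hbot, sup_bot_eq] at this
    exact hKL.ne this
  obtain ⟨c, ⟨hcK, g, rfl⟩, hc⟩ := (Submodule.ne_bot_iff _).mp hne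
  rw [U.orthogonal_range] at hcK
  exact ⟨g, hc, hcK⟩

lemma not_isUnit_adjoint_comp_of_range_ssubset {U V : E →L[𝕜] F}
    (hU : IsClosed (Set.range U)) (h : Set.range U ⊂ Set.range V) :
    ¬ IsUnit (adjoint U ∘L V) := by
  obtain ⟨g, hVg, hUVg⟩ := exists_adjoint_apply_eq_zero_of_range_ssubset hU h
  intro hA
  have hg : g = 0 := (isUnit_iff_bijective.mp hA).1 (by simp [hUVg])
  exact hVg (by rw [hg, map_zero])

end Adjoint

section Frame

variable {E : Type*} [NormedAddCommGroup E] [InnerProductSpace ℂ E]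

lemma IsAnalysisOp.norm_sq_apply {φ : ℕ → E} {U : E →L[ℂ] Ltwo} (hU : IsAnalysisOp φ U)
    (f : E) : ‖U f‖ ^ 2 = ∑' n, ‖(⟪φ n, f⟫ : ℂ)‖ ^ 2 := by
  simp only [lp.norm_sq_eq_tsum, hU f]

lemma IsFrameWith.sqrt_mul_norm_le {φ : ℕ → E} {m M : ℝ} (hφ : IsFrameWith φ m M)
    {U : E →L[ℂ] Ltwo} (hU : IsAnalysisOp φ U) (f : E) : Real.sqrt m * ‖f‖ ≤ ‖U f‖ := by
  refine le_of_sq_le_sq ?_ (norm_nonneg _)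
  rw [mul_pow, Real.sq_sqrt hφ.1.le, hU.norm_sq_apply]
  exact hφ.2.2 f

lemma IsFrame.isClosed_range [CompleteSpace E] {φ : ℕ → E} (hφ : IsFrame φ) {U : E →L[ℂ] Ltwo}
    (hU : IsAnalysisOp φ U) : IsClosed (Set.range U) := by
  obtain ⟨m, M, hmM⟩ := hφ
  have hm : 0 < Real.sqrt m := Real.sqrt_pos.mpr hmM.1
  refine (U.antilipschitz_of_bound (K := (Real.sqrt m)⁻¹.toNNReal) fun f => ?_).isClosed_range
    U.uniformContinuous
  rw [Real.coe_toNNReal _ (by positivity), inv_mul_eq_div, le_div_iff₀ hm, mul_comm]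
  exact hmM.sqrt_mul_norm_le hU f

end Frame

/-- Let Φ, Ψ be frames for H such that one of `Range U_Φ`, `Range U_Ψ` is
strictly contained in the other.  Then Φ and Ψ are not g-dual frames (`T_Φ U_Ψ` is not
invertible); in particular they are not approximately dual frames:
`‖Id - T_Φ U_Ψ‖ ≥ 1` and `‖Id - T_Ψ U_Φ‖ ≥ 1`. -/
theorem statement15 (φ ψ : ℕ → H) (hφ : IsFrame φ) (hψ : IsFrame ψ)
    (Uφ Uψ : H →L[ℂ] Ltwo) (hUφ : IsAnalysisOp φ Uφ) (hUψ : IsAnalysisOp ψ Uψ)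
    (hrange : Set.range (⇑Uφ) ⊂ Set.range (⇑Uψ) ∨ Set.range (⇑Uψ) ⊂ Set.range (⇑Uφ)) :
    ¬ IsUnit (adjoint Uφ ∘L Uψ) ∧
    1 ≤ ‖(1 : H →L[ℂ] H) - adjoint Uφ ∘L Uψ‖ ∧
    1 ≤ ‖(1 : H →L[ℂ] H) - adjoint Uψ ∘L Uφ‖ := by
  have hnot : ¬ IsUnit (adjoint Uφ ∘L Uψ) := by
    rcases hrange with h | h
    · exact not_isUnit_adjoint_comp_of_range_ssubset (hφ.isClosed_range hUφ) h
    · rw [isUnit_adjoint_comp_comm]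
      exact not_isUnit_adjoint_comp_of_range_ssubset (hψ.isClosed_range hUψ) h
  refine ⟨hnot, one_le_norm_one_sub_of_not_isUnit hnot, one_le_norm_one_sub_of_not_isUnit ?_⟩
  rwa [← isUnit_adjoint_comp_comm]
end
end
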